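/- arXiv:2312.07817 — 10 statements merged into one kernel-verified Lean document; each statement's English description precedes it below -/
import Mathlib

section
/- Let p, q, r, t, u be positive real numbers with p·r ≥ t², and let k be a real number with 0 ≤ k ≤ 2qu/(pu + qr). Then the symmetric 2×2 real matrix with rows (2q − pk, −tk) and (−tk, 2u − rk) is positive semidefinite. -/
open Matrix

section

variable {R : Type*} [CommRing R] [LinearOrder R] [IsStrictOrderedRing R]

theorem binary_quadratic_nonneg {a b c : R} (ha : 0 ≤ a) (hc : 0 ≤ c) (hdisc : b ^ 2 ≤ a * c)
    (x y : R) : 0 ≤ a * x ^ 2 + 2 * b * x * y + c * y ^ 2 := by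
  rcases ha.eq_or_lt with rfl | ha
  · obtain rfl : b = 0 := by nlinarith [sq_nonneg b]
    nlinarith [sq_nonneg y]
  · -- `a` times the form is `(a x + b y)² + (a c - b²) y²`
    refine nonneg_of_mul_nonneg_right ?_ ha
    nlinarith [sq_nonneg (a * x + b * y), mul_nonneg (sub_nonneg.2 hdisc) (sq_nonneg y)]

theorem posSemidef_of_trace_nonneg_of_det_nonneg [StarRing R] [TrivialStar R] {a b c : R}
    (htr : 0 ≤ trace !![a, b; b, c]) (hdet : 0 ≤ det !![a, b; b, c]) :
    PosSemidef !![a, b; b, c] := by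
  rw [trace_fin_two_of] at htr
  rw [det_fin_two_of] at hdet
  have ha : 0 ≤ a := by nlinarith [sq_nonneg b]
  have hc : 0 ≤ c := by nlinarith [sq_nonneg b]
  refine .of_dotProduct_mulVec_nonneg ?_ fun v ↦ ?_
  · ext i j
    fin_cases i <;> fin_cases j <;> simp
  · convert binary_quadratic_nonneg ha hc (by linarith) (v 0) (v 1) using 1
    simp only [dotProduct, Pi.star_apply, star_trivial, mulVec, of_apply, cons_val',
      cons_val_fin_one, Fin.sum_univ_two, cons_val_zero, cons_val_one]
    ring

end

theorem posSemidef_lower_block_general (p q r t u k : ℝ)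
    (hp : 0 < p) (hq : 0 < q) (hr : 0 < r) (hu : 0 < u)
    (hprt : p * r ≥ t ^ 2) (hk : k ≤ 2 * q * u / (p * u + q * r)) :
    Matrix.PosSemidef !![2 * q - p * k, -(t * k); -(t * k), 2 * u - r * k] := by
  have hD : 0 < p * u + q * r := by positivity
  have hkD : k * (p * u + q * r) ≤ 2 * q * u := (le_div_iff₀ hD).1 hk
  apply posSemidef_of_trace_nonneg_of_det_nonneg
  · have hqu : q * u * (p + r) ≤ (q + u) * (p * u + q * r) := by
      nlinarith [mul_pos hp (mul_pos hu hu), mul_pos hr (mul_pos hq hq)]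
    have hpr : (p + r) * k * (p * u + q * r) ≤ 2 * (q + u) * (p * u + q * r) := by
      nlinarith [mul_le_mul_of_nonneg_left hkD (add_pos hp hr).le]
    rw [trace_fin_two_of]
    nlinarith [le_of_mul_le_mul_right hpr hD]
  · -- with `t² ≤ p r` the determinant is at least `2 (2 q u - k (p u + q r))`
    rw [det_fin_two_of]
    nlinarith [mul_le_mul_of_nonneg_right hprt (sq_nonneg k)]

/-- Algebraic core of the bound `M₁ + M₂ ⪰ k·E`: for positive `p q r t u` with
`p r ≥ t²` and `0 ≤ k ≤ 2qu/(pu + qr)`, the matrix `[[2q − pk, −tk], [−tk, 2u − rk]]`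
is positive semidefinite. -/
theorem posSemidef_lower_block (p q r t u k : ℝ)
    (hp : 0 < p) (hq : 0 < q) (hr : 0 < r) (ht : 0 < t) (hu : 0 < u)
    (hprt : p * r ≥ t ^ 2) (hk0 : 0 ≤ k) (hk : k ≤ 2 * q * u / (p * u + q * r)) :
    Matrix.PosSemidef !![2 * q - p * k, -(t * k); -(t * k), 2 * u - r * k] :=
  posSemidef_lower_block_general p q r t u k hp hq hr hu hprt hk
end

section
/- Let p, q, r, t, u be positive real numbers with p·r > t², and let k be a real number with k ≥ 2(pu + qr)/(pr − t²). Then the symmetric 2×2 real matrix with rows (pk − 2q, tk) and (tk, rk − 2u) is positive semidefinite. -/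
namespace Matrix

theorem posSemidef_fin_two_of (a b c : ℝ) (ha : 0 ≤ a) (hc : 0 ≤ c) (hdet : b * b ≤ a * c) :
    (!![a, b; b, c]).PosSemidef := by
  refine PosSemidef.of_dotProduct_mulVec_nonneg ?_ fun x ↦ ?_
  · ext i j
    fin_cases i <;> fin_cases j <;> rfl
  · simp only [dotProduct, mulVec, Fin.sum_univ_two, star_trivial, of_apply, cons_val',
      cons_val_zero, cons_val_one, empty_val', cons_val_fin_one]
    rcases ha.eq_or_lt with rfl | ha
    · obtain rfl : b = 0 := by nlinarith
      nlinarith [mul_nonneg hc (sq_nonneg (x 1))]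
    · have hsq : a * (x 0 * (a * x 0 + b * x 1) + x 1 * (b * x 0 + c * x 1)) =
          (a * x 0 + b * x 1) ^ 2 + (a * c - b * b) * x 1 ^ 2 := by ring
      refine nonneg_of_mul_nonneg_right ?_ ha
      rw [hsq]
      exact add_nonneg (sq_nonneg _) (mul_nonneg (sub_nonneg.2 hdet) (sq_nonneg _))

theorem PosSemidef.of_trace_nonneg_of_det_nonneg {A : Matrix (Fin 2) (Fin 2) ℝ} (hA : A.IsSymm)
    (htr : 0 ≤ A.trace) (hdet : 0 ≤ A.det) : A.PosSemidef := by
  have hsymm : A 1 0 = A 0 1 := hA.apply 0 1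
  rw [trace_fin_two] at htr
  rw [det_fin_two, hsymm] at hdet
  have hdiag : 0 ≤ A 0 0 * A 1 1 := by nlinarith [sq_nonneg (A 0 1)]
  have h00 : 0 ≤ A 0 0 := by nlinarith
  have h11 : 0 ≤ A 1 1 := by nlinarith
  rw [eta_fin_two A, hsymm]
  exact posSemidef_fin_two_of _ _ _ h00 h11 (by linarith)

end Matrix

theorem posSemidef_error_block_general (p q r t u k : ℝ)
    (hp : 0 < p) (hq : 0 < q) (hr : 0 < r) (hu : 0 < u)
    (hprt : p * r > t ^ 2) (hk : k ≥ 2 * (p * u + q * r) / (p * r - t ^ 2)) :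
    Matrix.PosSemidef !![p * k - 2 * q, t * k; t * k, r * k - 2 * u] := by
  have hgap : 0 < p * r - t ^ 2 := sub_pos.2 hprt
  have hk' : 2 * (p * u + q * r) ≤ k * (p * r - t ^ 2) := (div_le_iff₀ hgap).1 hk
  have hk0 : 0 ≤ k := nonneg_of_mul_nonneg_left (by nlinarith) hgap
  have hpk : 2 * q ≤ p * k := le_of_mul_le_mul_right (by nlinarith) hr
  have hrk : 2 * u ≤ r * k := le_of_mul_le_mul_right (by nlinarith) hp
  refine Matrix.PosSemidef.of_trace_nonneg_of_det_nonneg ?_ ?_ ?_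
  · exact Matrix.IsSymm.ext fun i j ↦ by fin_cases i <;> fin_cases j <;> rfl
  · rw [Matrix.trace_fin_two_of]
    linarith
  · -- the determinant is `k (k (pr − t²) − 2 (pu + qr)) + 4qu`
    rw [Matrix.det_fin_two_of]
    nlinarith [mul_nonneg hk0 (sub_nonneg.2 hk'), mul_pos hq hu]

/-- Algebraic core of the bound `M₃ ⪰ −k·E`: for positive `p q r t u` with
`p r > t²` and `k ≥ 2(pu + qr)/(pr − t²)`, the matrix `[[pk − 2q, tk], [tk, rk − 2u]]`
is positive semidefinite. -/
theorem posSemidef_error_block (p q r t u k : ℝ)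
    (hp : 0 < p) (hq : 0 < q) (hr : 0 < r) (ht : 0 < t) (hu : 0 < u)
    (hprt : p * r > t ^ 2) (hk : k ≥ 2 * (p * u + q * r) / (p * r - t ^ 2)) :
    Matrix.PosSemidef !![p * k - 2 * q, t * k; t * k, r * k - 2 * u] :=
  posSemidef_error_block_general p q r t u k hp hq hr hu hprt hk
end

section
/- Let s > 0 and let t be a real number with 0 < t < s². Then (2/s) · (t − t²/s²)/(1 + t − t²/s²) ≤ 2s/(4 + s²) ≤ 1/2. Moreover, (2/s) · (t − t²/s²)/(1 + t − t²/s²) = 1/2 holds if and only if s = 2 and t = 2. -/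
/-!
Write `u = t - t²/s²`, so that the quantity is `(2/s) · u/(1+u)`. Completing the square,
`u = s²/4 - ((t - s²/2)/s)²` is at most `s²/4`, with equality only at `t = s²/2`, and
`x ↦ x/(1+x)` is strictly increasing on `(-1, ∞)`; this gives the bound `2s/(4+s²)`.
Finally `1/2 - 2s/(4+s²) = (s-2)²/(2(4+s²))` is nonnegative and vanishes only at `s = 2`.
-/

open Set

lemma sub_sq_div_sq_eq (s t : ℝ) (hs : s ≠ 0) :
    t - t ^ 2 / s ^ 2 = s ^ 2 / 4 - ((t - s ^ 2 / 2) / s) ^ 2 := by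
  field_simp
  ring

lemma sub_sq_div_sq_le (s t : ℝ) (hs : s ≠ 0) : t - t ^ 2 / s ^ 2 ≤ s ^ 2 / 4 := by
  rw [sub_sq_div_sq_eq s t hs]
  linarith [sq_nonneg ((t - s ^ 2 / 2) / s)]

lemma sub_sq_div_sq_eq_iff (s t : ℝ) (hs : s ≠ 0) :
    t - t ^ 2 / s ^ 2 = s ^ 2 / 4 ↔ t = s ^ 2 / 2 := by
  rw [sub_sq_div_sq_eq s t hs, sub_eq_self, sq_eq_zero_iff, div_eq_zero_iff, sub_eq_zero]
  simp [hs]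

lemma strictMonoOn_div_one_add : StrictMonoOn (fun x : ℝ => x / (1 + x)) (Ioi (-1)) := by
  intro x hx y hy hxy
  rw [mem_Ioi] at hx hy
  rw [div_lt_div_iff₀ (by linarith) (by linarith)]
  linarith

lemma two_mul_div_four_add_sq_eq (s : ℝ) :
    2 * s / (4 + s ^ 2) = 1 / 2 - (s - 2) ^ 2 / (2 * (4 + s ^ 2)) := by
  field_simp
  ring

lemma two_mul_div_four_add_sq_le (s : ℝ) : 2 * s / (4 + s ^ 2) ≤ 1 / 2 := by
  rw [two_mul_div_four_add_sq_eq]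
  have : 0 ≤ (s - 2) ^ 2 / (2 * (4 + s ^ 2)) := by positivity
  linarith

lemma two_mul_div_four_add_sq_eq_half_iff (s : ℝ) : 2 * s / (4 + s ^ 2) = 1 / 2 ↔ s = 2 := by
  rw [two_mul_div_four_add_sq_eq, sub_eq_self, div_eq_zero_iff, sq_eq_zero_iff, sub_eq_zero]
  have : 2 * (4 + s ^ 2) ≠ 0 := by positivity
  simp [this]

/-- The friction scaling `s = 2` is optimal: for `s > 0` and `0 < t < s²`,
`(2/s)·(t − t²/s²)/(1 + t − t²/s²) ≤ 2s/(4 + s²) ≤ 1/2`, with equality `= 1/2`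
precisely when `s = 2` and `t = 2`. -/
theorem optimal_friction_scaling (s t : ℝ) (hs : 0 < s) (ht0 : 0 < t) (hts : t < s ^ 2) :
    (2 / s) * (t - t ^ 2 / s ^ 2) / (1 + t - t ^ 2 / s ^ 2) ≤ 2 * s / (4 + s ^ 2) ∧
    2 * s / (4 + s ^ 2) ≤ 1 / 2 ∧
    ((2 / s) * (t - t ^ 2 / s ^ 2) / (1 + t - t ^ 2 / s ^ 2) = 1 / 2 ↔ s = 2 ∧ t = 2) := by
  set g : ℝ → ℝ := fun x => x / (1 + x)
  set u := t - t ^ 2 / s ^ 2 with hu_def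
  have hu : 0 < u := by
    rw [hu_def, sub_pos, div_lt_iff₀ (by positivity)]
    nlinarith
  have hexpr : (2 / s) * u / (1 + t - t ^ 2 / s ^ 2) = 2 / s * g u := by
    rw [add_sub_assoc, mul_div_assoc]
  have hpeak : 2 / s * g (s ^ 2 / 4) = 2 * s / (4 + s ^ 2) := by
    simp only [g]
    field_simp
  have hmem : ∀ x, 0 < x → x ∈ Ioi (-1 : ℝ) := fun x hx => mem_Ioi.2 (by linarith)
  have hu_le : g u ≤ g (s ^ 2 / 4) :=
    strictMonoOn_div_one_add.monotoneOn (hmem u hu) (hmem _ (by positivity))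
      (sub_sq_div_sq_le s t hs.ne')
  have hle : 2 / s * g u ≤ 2 * s / (4 + s ^ 2) := hpeak ▸ by gcongr
  rw [hexpr]
  refine ⟨hle, two_mul_div_four_add_sq_le s, fun h => ?_, ?_⟩
  · have hs2 : s = 2 := (two_mul_div_four_add_sq_eq_half_iff s).1 <|
      le_antisymm (two_mul_div_four_add_sq_le s) (h ▸ hle)
    subst hs2
    have hgu : g u = g (2 ^ 2 / 4) := by
      rw [← mul_right_inj' (by norm_num : (2 / 2 : ℝ) ≠ 0), h, hpeak]
      norm_num
    have := strictMonoOn_div_one_add.injOn (hmem u hu) (hmem _ (by positivity)) hgu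
    refine ⟨rfl, ?_⟩
    rw [(sub_sq_div_sq_eq_iff 2 t two_ne_zero).1 this]
    norm_num
  · rintro ⟨rfl, rfl⟩
    norm_num [u, g]
end

section
/- For all real numbers ε > 0 and α > 0, one has ( ((ε² + 3ε + 2)/((201/50)·ε)) · √α + √2 · ε ) · (α + 1) ≥ 4α. -/
/-!
Write `A = (ε² + 3ε + 2)/(4.02 ε)`. Since `√α (α + 1) ≥ 2α` and `α + 1 ≥ α`, the left-hand side
is at least `α (2A + √2 ε)`, so it suffices that `2A + √2 ε ≥ 4`. After clearing `4.02 ε` this is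
a quadratic in `ε` with negative discriminant, which is AM–GM applied to the terms
`(2/4.02 + √2) ε` and `4/(4.02 ε)`.
-/

lemma two_mul_le_sqrt_mul_add_one {α : ℝ} (hα : 0 ≤ α) : 2 * α ≤ √α * (α + 1) := by
  have hsq : √α ^ 2 = α := Real.sq_sqrt hα
  nlinarith [mul_nonneg (Real.sqrt_nonneg α) (sq_nonneg (√α - 1))]

lemma seven_fifths_le_sqrt_two : (7 / 5 : ℝ) ≤ √2 :=
  Real.le_sqrt_of_sq_le (by norm_num)

lemma four_le_two_mul_div_add_sqrt_two_mul {ε : ℝ} (hε : 0 < ε) :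
    4 ≤ 2 * ((ε ^ 2 + 3 * ε + 2) / ((201 / 50) * ε)) + √2 * ε := by
  have hq := seven_fifths_le_sqrt_two
  have hquad : 4 * ((201 / 50) * ε) ≤ 2 * (ε ^ 2 + 3 * ε + 2) + √2 * ε * ((201 / 50) * ε) := by
    nlinarith [sq_nonneg (ε - 2 / 3), mul_le_mul_of_nonneg_right hq (sq_nonneg ε)]
  have hc : 0 < (201 / 50) * ε := by positivity
  rw [mul_div_assoc', div_add' _ _ _ hc.ne', le_div_iff₀ hc]
  linarith

/-- Key elementary inequality for the DMS rate comparison: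
`((ε² + 3ε + 2)/(4.02·ε)·√α + √2·ε)·(α + 1) ≥ 4α` for all `ε > 0`, `α > 0`. -/
theorem dms_key_inequality (ε α : ℝ) (hε : 0 < ε) (hα : 0 < α) :
    ((ε ^ 2 + 3 * ε + 2) / ((201 / 50) * ε) * Real.sqrt α + Real.sqrt 2 * ε) * (α + 1)
      ≥ 4 * α := by
  set A := (ε ^ 2 + 3 * ε + 2) / ((201 / 50) * ε)
  calc 4 * α ≤ (2 * A + √2 * ε) * α :=
        mul_le_mul_of_nonneg_right (four_le_two_mul_div_add_sqrt_two_mul hε) hα.le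
    _ = A * (2 * α) + √2 * ε * α := by ring
    _ ≤ A * (√α * (α + 1)) + √2 * ε * (α + 1) := by
        gcongr A * ?_ + _ * ?_
        · exact two_mul_le_sqrt_mul_add_one hα.le
        · linarith
    _ = (A * √α + √2 * ε) * (α + 1) := by ring
end

section
/- Let λ > 0, α > 0, and ε ∈ (0,1), and define λ_DMS = ( λ − ε/(1+α) − √( ε²·(√2 + λ/2)² + (λ − (2α+1)ε/(α+1))² ) ) / (2(1+ε)). If λ_DMS > 0, then λ_DMS ≤ (4α/(α+1) − √2·ε) · ε / ((1+ε)(2+ε)). -/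
/-!
Write the numerator of `λ_DMS` as `L - s` with `L = λ - ε/(1+α)` and
`s = √(E² + D²)`, where `E = ε(√2 + λ/2)` and `D = λ - (2α+1)ε/(α+1)`.
Multiplying by the conjugate gives `(L - s)(L + s) = L² - D² - E²`, and
`L² - D² = 4αε/(α+1)·(λ - ε)` because `L + D = 2(λ - ε)`. Positivity of the
numerator forces `λ > ε`, and `s ≥ D` bounds the conjugate below by `2(λ - ε)`.
Finally `E² ≥ 2ε²(√2 + ε/2)(λ - ε)` by AM-GM, which cancels the factor `λ - ε`.
-/

open Real

lemma sub_le_sq_sub_sq_div {L s m : ℝ} (hpos : 0 < L - s) (hm : 0 < m) (h : m ≤ L + s) :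
    L - s ≤ (L ^ 2 - s ^ 2) / m := by
  rw [le_div_iff₀ hm]
  nlinarith [mul_le_mul_of_nonneg_left h hpos.le]

lemma dms_numerator_le {lam α ε c : ℝ} (hα : 0 < α) (hε : 0 < ε)
    (hpos : 0 < lam - ε / (1 + α) -
      √(ε ^ 2 * (c + lam / 2) ^ 2 + (lam - (2 * α + 1) * ε / (α + 1)) ^ 2)) :
    lam - ε / (1 + α) -
        √(ε ^ 2 * (c + lam / 2) ^ 2 + (lam - (2 * α + 1) * ε / (α + 1)) ^ 2)
      ≤ 2 * α * ε / (α + 1) - ε ^ 2 * (c + ε / 2) := by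
  set L := lam - ε / (1 + α)
  set D := lam - (2 * α + 1) * ε / (α + 1)
  set s := √(ε ^ 2 * (c + lam / 2) ^ 2 + D ^ 2)
  have hα1 : 0 < α + 1 := by linarith
  have hs_sq : s ^ 2 = ε ^ 2 * (c + lam / 2) ^ 2 + D ^ 2 := Real.sq_sqrt (by positivity)
  have hD_le : D ≤ s := Real.le_sqrt_of_sq_le (le_add_of_nonneg_left (by positivity))
  have hsum : L + D = 2 * (lam - ε) := by simp only [L, D]; field_simp; ring
  have hconj : L ^ 2 - s ^ 2 = 4 * α * ε / (α + 1) * (lam - ε) - ε ^ 2 * (c + lam / 2) ^ 2 := by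
    rw [hs_sq]; simp only [L, D]; field_simp; ring
  have hu : 0 < lam - ε := by
    have hconj_pos : 0 < L ^ 2 - s ^ 2 := by nlinarith [Real.sqrt_nonneg (ε ^ 2 * (c + lam / 2) ^ 2 + D ^ 2)]
    have : 0 < 4 * α * ε / (α + 1) * (lam - ε) := by nlinarith [sq_nonneg (ε * (c + lam / 2))]
    exact pos_of_mul_pos_right this (by positivity)
  have hamgm : 2 * (c + ε / 2) * (lam - ε) ≤ (c + lam / 2) ^ 2 := by
    nlinarith [four_mul_le_sq_add (c + ε / 2) ((lam - ε) / 2)]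
  calc L - s ≤ (L ^ 2 - s ^ 2) / (2 * (lam - ε)) :=
        sub_le_sq_sub_sq_div hpos (by positivity) (by linarith)
    _ ≤ (4 * α * ε / (α + 1) * (lam - ε) - ε ^ 2 * (2 * (c + ε / 2) * (lam - ε))) /
          (2 * (lam - ε)) := by rw [hconj]; gcongr
    _ = 2 * α * ε / (α + 1) - ε ^ 2 * (c + ε / 2) := by field_simp; ring

lemma dms_numerator_bound_div_le {α ε c : ℝ} (hα : 0 ≤ α) (hc : 0 ≤ c) (hε : 0 < ε)
    (hε2 : ε < 2) :
    (2 * α * ε / (α + 1) - ε ^ 2 * (c + ε / 2)) / (2 * (1 + ε))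
      ≤ (4 * α / (α + 1) - c * ε) * ε / ((1 + ε) * (2 + ε)) := by
  rw [div_le_div_iff₀ (by positivity) (by positivity)]
  have ha : 0 ≤ α / (α + 1) := by positivity
  have h2α : 2 * α * ε / (α + 1) = 2 * ε * (α / (α + 1)) := by ring
  have h4α : 4 * α / (α + 1) = 4 * (α / (α + 1)) := by ring
  rw [h2α, h4α]
  nlinarith [mul_nonneg (mul_nonneg ha hε.le) (sub_pos.2 hε2).le, mul_nonneg ha hε.le,
    mul_nonneg hc (pow_pos hε 3).le, mul_nonneg hc (pow_pos hε 4).le, pow_pos hε 3, pow_pos hε 4,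
    pow_pos hε 5]

theorem dms_rate_intermediate_bound_general (lam α ε : ℝ) (hα : 0 < α)
    (hε : ε ∈ Set.Ioo (0 : ℝ) 1)
    (hpos : 0 < (lam - ε / (1 + α) -
        Real.sqrt (ε ^ 2 * (Real.sqrt 2 + lam / 2) ^ 2 +
          (lam - (2 * α + 1) * ε / (α + 1)) ^ 2)) / (2 * (1 + ε))) :
    (lam - ε / (1 + α) -
        Real.sqrt (ε ^ 2 * (Real.sqrt 2 + lam / 2) ^ 2 +
          (lam - (2 * α + 1) * ε / (α + 1)) ^ 2)) / (2 * (1 + ε))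
      ≤ (4 * α / (α + 1) - Real.sqrt 2 * ε) * ε / ((1 + ε) * (2 + ε)) := by
  obtain ⟨hε0, hε1⟩ := hε
  have hnum_pos := (div_pos_iff_of_pos_right (by positivity)).1 hpos
  calc _ ≤ (2 * α * ε / (α + 1) - ε ^ 2 * (√2 + ε / 2)) / (2 * (1 + ε)) := by
        gcongr ?_ / _; exact dms_numerator_le hα hε0 hnum_pos
    _ ≤ _ := dms_numerator_bound_div_le hα.le (Real.sqrt_nonneg 2) hε0 (by linarith)

/-- Intermediate bound on the DMS hypocoercive rate: if
`λ_DMS = (λ − ε/(1+α) − √(ε²(√2 + λ/2)² + (λ − (2α+1)ε/(α+1))²))/(2(1+ε))` is positive,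
then `λ_DMS ≤ (4α/(α+1) − √2·ε)·ε/((1+ε)(2+ε))`. -/
theorem dms_rate_intermediate_bound (lam α ε : ℝ) (hlam : 0 < lam) (hα : 0 < α)
    (hε : ε ∈ Set.Ioo (0 : ℝ) 1)
    (hpos : 0 < (lam - ε / (1 + α) -
        Real.sqrt (ε ^ 2 * (Real.sqrt 2 + lam / 2) ^ 2 +
          (lam - (2 * α + 1) * ε / (α + 1)) ^ 2)) / (2 * (1 + ε))) :
    (lam - ε / (1 + α) -
        Real.sqrt (ε ^ 2 * (Real.sqrt 2 + lam / 2) ^ 2 +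
          (lam - (2 * α + 1) * ε / (α + 1)) ^ 2)) / (2 * (1 + ε))
      ≤ (4 * α / (α + 1) - Real.sqrt 2 * ε) * ε / ((1 + ε) * (2 + ε)) :=
  dms_rate_intermediate_bound_general lam α ε hα hε hpos
end

section
/- For all real numbers λ > 0, α > 0, and ε ∈ (−1, 1): ( λ − ε/(1+α) − √( ε²·(√2 + λ/2)² + (λ − (2α+1)ε/(α+1))² ) ) / (2(1+|ε|)) ≤ √α / (201/50). -/
/-!
Write `t = α/(α+1)`, so that the two shifts in the statement are `ε(1-t)` and `ε(1+t)`.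
Testing the vector under the square root against the unit vector
`(4ε, 4-ε²)/(4+ε²)` (Cauchy–Schwarz) bounds `(4+ε²)` times the numerator by
`8tε - 4√2ε² - 2ε³`, which is at most `2√2 t²`: by completing the square in `t - √2ε`
for `ε ≥ 0`, and because it is nonpositive for `-2√2 ≤ ε ≤ 0`.
Finally `t² ≤ √α/2` because `α + 1 ≥ 2√α`, so the numerator is at most `√α/(2√2)`,
the whole quotient at most `√α/(4√2)`, and `4√2 > 201/50`.
-/

open Real

theorem mul_add_mul_le_sqrt_mul_sqrt (p q a b : ℝ) :
    p * a + q * b ≤ √(p ^ 2 + q ^ 2) * √(a ^ 2 + b ^ 2) := by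
  rw [← sqrt_mul (by positivity)]
  exact le_sqrt_of_sq_le (by nlinarith [sq_nonneg (p * b - q * a)])

theorem four_add_sq_mul_sub_sqrt_le (lam ε t r : ℝ) :
    (4 + ε ^ 2) * (lam - ε * (1 - t) -
        √(ε ^ 2 * (r + lam / 2) ^ 2 + (lam - ε * (1 + t)) ^ 2))
      ≤ 8 * t * ε - 4 * r * ε ^ 2 - 2 * ε ^ 3 := by
  have hcs := mul_add_mul_le_sqrt_mul_sqrt (4 * ε) (4 - ε ^ 2) (ε * (r + lam / 2))
    (lam - ε * (1 + t))
  have hnorm : √((4 * ε) ^ 2 + (4 - ε ^ 2) ^ 2) = 4 + ε ^ 2 := by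
    rw [show (4 * ε) ^ 2 + (4 - ε ^ 2) ^ 2 = (4 + ε ^ 2) ^ 2 by ring]
    exact sqrt_sq (by positivity)
  rw [hnorm, mul_pow] at hcs
  linear_combination hcs

theorem mul_cubic_le_four_mul_sq {ε t r : ℝ} (hr : 0 < r) (ht : 0 ≤ t) (hε : -2 * r ≤ ε) :
    r * (8 * t * ε - 4 * r * ε ^ 2 - 2 * ε ^ 3) ≤ 4 * t ^ 2 := by
  rcases le_total 0 ε with hε0 | hε0
  · nlinarith [sq_nonneg (t - r * ε), mul_nonneg hr.le (pow_nonneg hε0 3)]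
  · nlinarith [mul_nonneg (mul_nonneg hr.le ht) (neg_nonneg.2 hε0),
      mul_nonneg (mul_nonneg hr.le (sq_nonneg ε)) (by linarith : 0 ≤ 2 * r + ε)]

theorem div_add_one_sq_le_sqrt_div_two {α : ℝ} (hα : 0 ≤ α) :
    (α / (α + 1)) ^ 2 ≤ √α / 2 := by
  obtain ⟨s, hs, rfl⟩ : ∃ s, 0 ≤ s ∧ α = s ^ 2 :=
    ⟨√α, sqrt_nonneg α, (sq_sqrt hα).symm⟩
  rw [sqrt_sq hs, div_pow, div_le_div_iff₀ (by positivity) two_pos]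
  -- `(s² + 1)² ≥ 2s(s² + 1) ≥ 2s³` by AM–GM
  nlinarith [mul_nonneg (mul_nonneg hs (sq_nonneg (s - 1))) (by positivity : 0 ≤ s ^ 2 + 1),
    pow_nonneg hs 3]

theorem div_le_of_sqrt_two_mul_le {N s ε : ℝ} (hs : 0 ≤ s)
    (hN : √2 * ((4 + ε ^ 2) * N) ≤ 2 * s) :
    N / (2 * (1 + |ε|)) ≤ s / (201 / 50) := by
  have h2 : (201 / 200 : ℝ) ≤ √2 := le_sqrt_of_sq_le (by norm_num)
  rw [div_le_div_iff₀ (by positivity) (by norm_num)]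
  have hrhs : 0 ≤ s * (2 * (1 + |ε|)) - 2 * s := by
    nlinarith [mul_nonneg hs (abs_nonneg ε)]
  rcases le_total N 0 with hN0 | hN0
  · nlinarith
  · have : 201 / 50 * N ≤ √2 * ((4 + ε ^ 2) * N) := by
      nlinarith [mul_nonneg (mul_nonneg hN0 (sq_nonneg ε)) (sqrt_nonneg 2)]
    linarith

theorem dms_rate_upper_bound_general (lam α ε : ℝ) (hα : 0 < α)
    (hε : ε ∈ Set.Ioo (-1 : ℝ) 1) :
    (lam - ε / (1 + α) -
        Real.sqrt (ε ^ 2 * (Real.sqrt 2 + lam / 2) ^ 2 +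
          (lam - (2 * α + 1) * ε / (α + 1)) ^ 2)) / (2 * (1 + |ε|))
      ≤ Real.sqrt α / (201 / 50) := by
  obtain ⟨t, ht⟩ : ∃ t, t = α / (α + 1) := ⟨_, rfl⟩
  have hx : ε / (1 + α) = ε * (1 - t) := by rw [ht]; field_simp; ring
  have hy : (2 * α + 1) * ε / (α + 1) = ε * (1 + t) := by rw [ht]; field_simp; ring
  rw [hx, hy]
  set N := lam - ε * (1 - t) - √(ε ^ 2 * (√2 + lam / 2) ^ 2 + (lam - ε * (1 + t)) ^ 2)
  have hN : √2 * ((4 + ε ^ 2) * N) ≤ 2 * √α := by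
    have hcs := four_add_sq_mul_sub_sqrt_le lam ε t √2
    have hε2 : -2 * √2 ≤ ε := by
      linarith [hε.1, le_sqrt_of_sq_le (by norm_num : (1 : ℝ) ^ 2 ≤ 2)]
    have ht0 : 0 ≤ t := by rw [ht]; positivity
    have hsq := mul_cubic_le_four_mul_sq (sqrt_pos.2 two_pos) ht0 hε2
    have ht2 : t ^ 2 ≤ √α / 2 := ht ▸ div_add_one_sq_le_sqrt_div_two hα.le
    linarith [mul_le_mul_of_nonneg_left hcs (sqrt_nonneg 2)]
  exact div_le_of_sqrt_two_mul_le (sqrt_nonneg α) hN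

/-- The DMS hypocoercive rate with any constant scalar friction `λ` is at most `√α/4.02`:
for all `λ > 0`, `α > 0`, `ε ∈ (−1, 1)`,
`(λ − ε/(1+α) − √(ε²(√2 + λ/2)² + (λ − (2α+1)ε/(α+1))²))/(2(1+|ε|)) ≤ √α/(201/50)`. -/
theorem dms_rate_upper_bound (lam α ε : ℝ) (hlam : 0 < lam) (hα : 0 < α)
    (hε : ε ∈ Set.Ioo (-1 : ℝ) 1) :
    (lam - ε / (1 + α) -
        Real.sqrt (ε ^ 2 * (Real.sqrt 2 + lam / 2) ^ 2 +
          (lam - (2 * α + 1) * ε / (α + 1)) ^ 2)) / (2 * (1 + |ε|))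
      ≤ Real.sqrt α / (201 / 50) :=
  dms_rate_upper_bound_general lam α ε hα hε
end

section
/- Let w > 0 and λ > 2w be real numbers, set α₁ = (−λ + √(λ² − 4w²))/2 and α₂ = (−λ − √(λ² − 4w²))/2, and let A be the 2×2 real matrix with rows (0, 1) and (−w², −λ). Then for every real t, exp(t·A) = (α₂ − α₁)⁻¹ times the 2×2 matrix with rows ( α₂ e^{α₁ t} − α₁ e^{α₂ t}, e^{α₂ t} − e^{α₁ t} ) and ( α₁ α₂ (e^{α₁ t} − e^{α₂ t}), α₂ e^{α₂ t} − α₁ e^{α₁ t} ). -/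
/-!
The roots `α₁ ≠ α₂` of `X² + λX + w²` are the eigenvalues of the companion matrix `A`, with
eigenvectors `(1, αᵢ)`. Conjugating by the Vandermonde matrix `!![1, 1; α₁, α₂]` diagonalises `A`,
so `exp (tA)` is that conjugate of `diagonal ![e^{α₁t}, e^{α₂t}]`, which multiplies out to the
stated matrix.
-/

open Matrix

namespace Matrix

variable {K : Type*} [Field K]

theorem inv_vandermonde_fin_two (a b : K) :
    (!![1, 1; a, b] : Matrix (Fin 2) (Fin 2) K)⁻¹ = (b - a)⁻¹ • !![b, -1; -a, 1] := by
  rw [inv_def, adjugate_fin_two, det_fin_two_of, Ring.inverse_eq_inv']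
  simp

theorem vandermonde_mul_diagonal_mul_inv_fin_two (a b x y : K) :
    !![1, 1; a, b] * diagonal ![x, y] * (!![1, 1; a, b] : Matrix (Fin 2) (Fin 2) K)⁻¹ =
      (b - a)⁻¹ • !![b * x - a * y, y - x; a * b * (x - y), b * y - a * x] := by
  rw [inv_vandermonde_fin_two, diagonal_fin_two, Matrix.mul_smul, mul_fin_two, mul_fin_two]
  congr 1
  simp only [cons_val_zero, cons_val_one]
  ring_nf

theorem companion_fin_two_eq_vandermonde_mul_diagonal_mul_inv {a b : K} (hab : a ≠ b) :
    !![0, 1; -(a * b), a + b] =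
      !![1, 1; a, b] * diagonal ![a, b] * (!![1, 1; a, b] : Matrix (Fin 2) (Fin 2) K)⁻¹ := by
  rw [vandermonde_mul_diagonal_mul_inv_fin_two, eq_inv_smul_iff₀ (sub_ne_zero.mpr hab.symm),
    smul_of]
  simp only [smul_cons, smul_empty, smul_eq_mul]
  ring_nf

theorem exp_smul_companion_fin_two {𝕂 : Type*} [NormedField 𝕂] [NormedAlgebra ℚ 𝕂]
    [CompleteSpace 𝕂] {a b : 𝕂} (hab : a ≠ b) (t : 𝕂) :
    NormedSpace.exp (t • !![0, 1; -(a * b), a + b]) =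
      (b - a)⁻¹ • !![b * NormedSpace.exp (a * t) - a * NormedSpace.exp (b * t),
          NormedSpace.exp (b * t) - NormedSpace.exp (a * t);
        a * b * (NormedSpace.exp (a * t) - NormedSpace.exp (b * t)),
          b * NormedSpace.exp (b * t) - a * NormedSpace.exp (a * t)] := by
  have hV : IsUnit (!![1, 1; a, b] : Matrix (Fin 2) (Fin 2) 𝕂) := by
    rw [isUnit_iff_isUnit_det, det_fin_two_of, isUnit_iff_ne_zero]
    simpa [sub_eq_zero] using hab.symm
  rw [companion_fin_two_eq_vandermonde_mul_diagonal_mul_inv hab, ← Matrix.smul_mul, ← Matrix.mul_smul,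
    ← diagonal_smul, exp_conj _ _ hV, exp_diagonal, ← vandermonde_mul_diagonal_mul_inv_fin_two]
  congr 3
  ext i
  fin_cases i <;> simp [mul_comm t]

end Matrix

/-- Matrix exponential of the overdamped drift matrix: for `w > 0`, `λ > 2w`,
`α₁ = (−λ + √(λ² − 4w²))/2`, `α₂ = (−λ − √(λ² − 4w²))/2` and `A = [[0,1],[−w²,−λ]]`,
`exp(tA) = (α₂ − α₁)⁻¹·[[α₂e^{α₁t} − α₁e^{α₂t}, e^{α₂t} − e^{α₁t}],
[α₁α₂(e^{α₁t} − e^{α₂t}), α₂e^{α₂t} − α₁e^{α₁t}]]`. -/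
theorem exp_overdamped (w lam : ℝ) (hw : 0 < w) (hlam : 2 * w < lam)
    (α₁ α₂ : ℝ) (hα₁ : α₁ = (-lam + Real.sqrt (lam ^ 2 - 4 * w ^ 2)) / 2)
    (hα₂ : α₂ = (-lam - Real.sqrt (lam ^ 2 - 4 * w ^ 2)) / 2) (t : ℝ) :
    NormedSpace.exp (t • (!![0, 1; -w ^ 2, -lam] : Matrix (Fin 2) (Fin 2) ℝ)) =
      (α₂ - α₁)⁻¹ •
        !![α₂ * Real.exp (α₁ * t) - α₁ * Real.exp (α₂ * t),
            Real.exp (α₂ * t) - Real.exp (α₁ * t);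
          α₁ * α₂ * (Real.exp (α₁ * t) - Real.exp (α₂ * t)),
            α₂ * Real.exp (α₂ * t) - α₁ * Real.exp (α₁ * t)] := by
  have hdisc : 0 < lam ^ 2 - 4 * w ^ 2 := by nlinarith
  have hsum : α₁ + α₂ = -lam := by rw [hα₁, hα₂]; ring
  have hprod : α₁ * α₂ = w ^ 2 := by
    rw [hα₁, hα₂]; linear_combination -Real.sq_sqrt hdisc.le / 4
  have hne : α₁ ≠ α₂ := by
    rw [hα₁, hα₂]; linarith [Real.sqrt_pos.mpr hdisc]
  have hA : (!![0, 1; -w ^ 2, -lam] : Matrix (Fin 2) (Fin 2) ℝ) =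
      !![0, 1; -(α₁ * α₂), α₁ + α₂] := by
    rw [hsum, hprod]
  rw [hA, exp_smul_companion_fin_two hne, ← Real.exp_eq_exp_ℝ]
end

section
/- Let w > 0 and λ > 2w be real numbers, set α₁ = (−λ + √(λ² − 4w²))/2 and α₂ = (−λ − √(λ² − 4w²))/2, let A be the 2×2 real matrix with rows (0, 1) and (−w², −λ), and let D be the 2×2 matrix with rows (0, 0) and (0, 2λ). Then for every t ≥ 0, ∫₀ᵗ exp((t−s)·A) · D · exp((t−s)·Aᵀ) ds = (2λ/(α₁ − α₂)²) times the symmetric 2×2 matrix with rows ( p + 2q + r, α₁(p+q) + α₂(q+r) ) and ( α₁(p+q) + α₂(q+r), α₁² p + 2α₁α₂ q + α₂² r ), where p = (e^{2α₁ t} − 1)/(2α₁), q = −(e^{(α₁+α₂)t} − 1)/(α₁+α₂), and r = (e^{2α₂ t} − 1)/(2α₂). -/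
/-!
Since `α₁ + α₂ = -λ` and `α₁ α₂ = w²`, `A` is the companion matrix of `(X - α₁)(X - α₂)`; it
is diagonalised by the Vandermonde matrix with columns `vᵢ = (1, αᵢ)`, which makes `exp (u • A)`
explicit. As `D = 2λ e₂ e₂ᵀ` has rank one, `exp (u • A) * D * exp (u • A)ᵀ = 2λ c cᵀ` with `c`
the second column of `exp (u • A)`, namely `(e^{α₁u} v₁ - e^{α₂u} v₂) / (α₁ - α₂)`. Expanding
`c cᵀ` leaves three exponentials in `u = t - s` times constant matrices, which integrate to `p`,
`q`, `r`.
-/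

open Matrix

attribute [local instance] Matrix.normedAddCommGroup Matrix.normedSpace

lemma integral_exp_mul_sub (c t : ℝ) (hc : c ≠ 0) :
    ∫ s in (0 : ℝ)..t, Real.exp (c * (t - s)) = (Real.exp (c * t) - 1) / c := by
  rw [intervalIntegral.integral_comp_sub_left (fun x => Real.exp (c * x)) t, sub_self, sub_zero,
    intervalIntegral.integral_comp_mul_left Real.exp hc, integral_exp, mul_zero, Real.exp_zero,
    smul_eq_mul, inv_mul_eq_div]

lemma intervalIntegral.integral_smul_const_sub_add {E : Type*} [NormedAddCommGroup E]
    [NormedSpace ℝ E] [CompleteSpace E] {f g h : ℝ → ℝ} (hf : Continuous f) (hg : Continuous g)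
    (hh : Continuous h) (a b : ℝ) (x y z : E) :
    ∫ s in a..b, (f s • x - g s • y + h s • z) =
      (∫ s in a..b, f s) • x - (∫ s in a..b, g s) • y + (∫ s in a..b, h s) • z := by
  have hint {k : ℝ → ℝ} (hk : Continuous k) (v : E) :
      IntervalIntegrable (fun s => k s • v) MeasureTheory.volume a b :=
    (hk.smul continuous_const).intervalIntegrable a b
  rw [integral_add ((hint hf x).sub (hint hg y)) (hint hh z), integral_sub (hint hf x) (hint hg y),
    integral_smul_const, integral_smul_const, integral_smul_const]

lemma companion_eq_conj_diagonal {K : Type*} [Field K] {α₁ α₂ : K} (h : α₁ ≠ α₂) :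
    !![0, 1; -(α₁ * α₂), α₁ + α₂] =
      !![1, 1; α₁, α₂] * diagonal ![α₁, α₂] * (!![1, 1; α₁, α₂])⁻¹ := by
  have hd : α₂ - α₁ ≠ 0 := sub_ne_zero.2 h.symm
  rw [inv_eq_right_inv (B := (α₂ - α₁)⁻¹ • !![α₂, -1; -α₁, 1])]
  all_goals
    ext i j
    fin_cases i <;> fin_cases j <;> simp [mul_apply, Fin.sum_univ_two, vecMul_diagonal] <;>
      field_simp <;> ring

lemma exp_smul_companion {α₁ α₂ : ℝ} (h : α₁ ≠ α₂) (u : ℝ) :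
    NormedSpace.exp (u • !![0, 1; -(α₁ * α₂), α₁ + α₂]) = (α₁ - α₂)⁻¹ •
      !![α₁ * Real.exp (α₂ * u) - α₂ * Real.exp (α₁ * u), Real.exp (α₁ * u) - Real.exp (α₂ * u);
        α₁ * α₂ * (Real.exp (α₂ * u) - Real.exp (α₁ * u)),
        α₁ * Real.exp (α₁ * u) - α₂ * Real.exp (α₂ * u)] := by
  have hP : IsUnit !![(1 : ℝ), 1; α₁, α₂].det := by
    simpa [det_fin_two_of, sub_eq_zero] using h.symm
  rw [companion_eq_conj_diagonal h, ← Matrix.smul_mul, ← Matrix.mul_smul, ← diagonal_smul,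
    exp_conj _ _ ((isUnit_iff_isUnit_det _).2 hP), exp_diagonal, inv_def, adjugate_fin_two_of,
    det_fin_two_of]
  have hd : α₁ - α₂ ≠ 0 := sub_ne_zero.2 h
  ext i j
  fin_cases i <;> fin_cases j <;>
    simp [mul_apply, Fin.sum_univ_two, vecMul_diagonal, Pi.coe_exp, ← Real.exp_eq_exp_ℝ] <;>
    field_simp <;> ring

lemma mul_mul_transpose_eq_vecMulVec {R : Type*} [CommRing R] (M : Matrix (Fin 2) (Fin 2) R)
    (d : R) :
    M * !![0, 0; 0, d] * Mᵀ = d • vecMulVec (fun i => M i 1) (fun i => M i 1) := by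
  ext i j
  fin_cases i <;> fin_cases j <;> simp [mul_apply, Fin.sum_univ_two, vecMulVec] <;> ring

lemma exp_smul_companion_mul_mul_transpose {α₁ α₂ : ℝ} (h : α₁ ≠ α₂) (d u : ℝ) :
    NormedSpace.exp (u • !![0, 1; -(α₁ * α₂), α₁ + α₂]) * !![0, 0; 0, d] *
        (NormedSpace.exp (u • !![0, 1; -(α₁ * α₂), α₁ + α₂]))ᵀ =
      (d / (α₁ - α₂) ^ 2) •
        (Real.exp (2 * α₁ * u) • vecMulVec ![1, α₁] ![1, α₁] -
          Real.exp ((α₁ + α₂) * u) •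
            (vecMulVec ![1, α₁] ![1, α₂] + vecMulVec ![1, α₂] ![1, α₁]) +
          Real.exp (2 * α₂ * u) • vecMulVec ![1, α₂] ![1, α₂]) := by
  have hcol : (fun i => NormedSpace.exp (u • !![0, 1; -(α₁ * α₂), α₁ + α₂]) i 1) =
      (α₁ - α₂)⁻¹ • (Real.exp (α₁ * u) • ![1, α₁] - Real.exp (α₂ * u) • ![1, α₂]) := by
    rw [exp_smul_companion h]
    ext i
    fin_cases i <;> simp [mul_sub, mul_comm]
  have hexp (a b : ℝ) : Real.exp ((a + b) * u) = Real.exp (a * u) * Real.exp (b * u) := by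
    rw [add_mul, Real.exp_add]
  rw [mul_mul_transpose_eq_vecMulVec, hcol, two_mul, two_mul, hexp, hexp, hexp, div_eq_mul_inv,
    ← inv_pow]
  simp only [smul_vecMulVec, vecMulVec_smul, sub_vecMulVec, vecMulVec_sub]
  module

theorem ou_covariance_formula_general (w lam : ℝ) (hw : 0 < w) (hlam : 2 * w < lam)
    (α₁ α₂ : ℝ) (hα₁ : α₁ = (-lam + Real.sqrt (lam ^ 2 - 4 * w ^ 2)) / 2)
    (hα₂ : α₂ = (-lam - Real.sqrt (lam ^ 2 - 4 * w ^ 2)) / 2)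
    (A D : Matrix (Fin 2) (Fin 2) ℝ)
    (hA : A = !![0, 1; -w ^ 2, -lam]) (hD : D = !![0, 0; 0, 2 * lam])
    (t : ℝ)
    (p q r : ℝ)
    (hp : p = (Real.exp (2 * α₁ * t) - 1) / (2 * α₁))
    (hq : q = -((Real.exp ((α₁ + α₂) * t) - 1) / (α₁ + α₂)))
    (hr : r = (Real.exp (2 * α₂ * t) - 1) / (2 * α₂)) :
    ∫ s in (0 : ℝ)..t,
        NormedSpace.exp ((t - s) • A) * D * NormedSpace.exp ((t - s) • Aᵀ) =
      (2 * lam / (α₁ - α₂) ^ 2) •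
        !![p + 2 * q + r, α₁ * (p + q) + α₂ * (q + r);
          α₁ * (p + q) + α₂ * (q + r), α₁ ^ 2 * p + 2 * α₁ * α₂ * q + α₂ ^ 2 * r] := by
  have hdisc : 0 < lam ^ 2 - 4 * w ^ 2 := by nlinarith
  have hsum : α₁ + α₂ = -lam := by rw [hα₁, hα₂]; ring
  have hprod : α₁ * α₂ = w ^ 2 := by
    rw [hα₁, hα₂]; nlinarith [Real.sq_sqrt hdisc.le]
  have hne : α₁ ≠ α₂ := by
    rw [hα₁, hα₂]; linarith [Real.sqrt_pos.2 hdisc]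
  have hα₁₀ : α₁ ≠ 0 := left_ne_zero_of_mul (hprod ▸ pow_ne_zero 2 hw.ne')
  have hα₂₀ : α₂ ≠ 0 := right_ne_zero_of_mul (hprod ▸ pow_ne_zero 2 hw.ne')
  have hα₁₂ : α₁ + α₂ ≠ 0 := by rw [hsum]; linarith
  have hA_companion : A = !![0, 1; -(α₁ * α₂), α₁ + α₂] := by rw [hA, hprod, hsum]
  simp_rw [← transpose_smul, exp_transpose, hA_companion, hD,
    exp_smul_companion_mul_mul_transpose hne]
  rw [intervalIntegral.integral_smul,
    intervalIntegral.integral_smul_const_sub_add (by fun_prop) (by fun_prop) (by fun_prop),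
    integral_exp_mul_sub _ _ (mul_ne_zero two_ne_zero hα₁₀), integral_exp_mul_sub _ _ hα₁₂,
    integral_exp_mul_sub _ _ (mul_ne_zero two_ne_zero hα₂₀), ← hp, ← hr, ← neg_eq_iff_eq_neg.2 hq]
  congr 1
  ext i j
  fin_cases i <;> fin_cases j <;> simp [vecMulVec] <;> ring

/-- Covariance matrix of the overdamped two-dimensional Ornstein–Uhlenbeck process:
with `A = [[0,1],[−w²,−λ]]`, `D = [[0,0],[0,2λ]]`, eigenvalues `α₁, α₂` and
`p = (e^{2α₁t} − 1)/(2α₁)`, `q = −(e^{(α₁+α₂)t} − 1)/(α₁+α₂)`, `r = (e^{2α₂t} − 1)/(2α₂)`,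
`∫₀ᵗ e^{(t−s)A} D e^{(t−s)Aᵀ} ds = (2λ/(α₁−α₂)²)·[[p + 2q + r, α₁(p+q) + α₂(q+r)],
[α₁(p+q) + α₂(q+r), α₁²p + 2α₁α₂q + α₂²r]]`. -/
theorem ou_covariance_formula (w lam : ℝ) (hw : 0 < w) (hlam : 2 * w < lam)
    (α₁ α₂ : ℝ) (hα₁ : α₁ = (-lam + Real.sqrt (lam ^ 2 - 4 * w ^ 2)) / 2)
    (hα₂ : α₂ = (-lam - Real.sqrt (lam ^ 2 - 4 * w ^ 2)) / 2)
    (A D : Matrix (Fin 2) (Fin 2) ℝ)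
    (hA : A = !![0, 1; -w ^ 2, -lam]) (hD : D = !![0, 0; 0, 2 * lam])
    (t : ℝ) (ht : 0 ≤ t)
    (p q r : ℝ)
    (hp : p = (Real.exp (2 * α₁ * t) - 1) / (2 * α₁))
    (hq : q = -((Real.exp ((α₁ + α₂) * t) - 1) / (α₁ + α₂)))
    (hr : r = (Real.exp (2 * α₂ * t) - 1) / (2 * α₂)) :
    ∫ s in (0 : ℝ)..t,
        NormedSpace.exp ((t - s) • A) * D * NormedSpace.exp ((t - s) • Aᵀ) =
      (2 * lam / (α₁ - α₂) ^ 2) •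
        !![p + 2 * q + r, α₁ * (p + q) + α₂ * (q + r);
          α₁ * (p + q) + α₂ * (q + r), α₁ ^ 2 * p + 2 * α₁ * α₂ * q + α₂ ^ 2 * r] :=
  ou_covariance_formula_general w lam hw hlam α₁ α₂ hα₁ hα₂ A D hA hD t p q r hp hq hr
end

section
/- Let w > 0 and λ > 2w be real numbers, let A be the 2×2 real matrix with rows (0, 1) and (−w², −λ), and let D be the 2×2 matrix with rows (0, 0) and (0, 2λ). Then, as t → ∞, the matrix Σ(t) = ∫₀ᵗ exp((t−s)·A) · D · exp((t−s)·Aᵀ) ds converges to the diagonal 2×2 matrix with diagonal entries 1/w² and 1. -/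
/-!
The stationary covariance `Σ∞ = diag(1/w², 1)` solves the Lyapunov equation
`A Σ∞ + Σ∞ Aᵀ = -D`, so `u ↦ -e^{uA} Σ∞ e^{uAᵀ}` is an antiderivative of the integrand and
`Σ(t) = Σ∞ - e^{tA} Σ∞ e^{tAᵀ}`. Since `λ > 2w`, the characteristic polynomial `x² + λx + w²` of
`A` has two distinct negative roots, so `A` is diagonalisable with negative eigenvalues and
`e^{tA} → 0`.
-/

open Matrix Filter

attribute [local instance] Matrix.normedAddCommGroup Matrix.normedSpace

open NormedSpace Topology

namespace Matrix

variable {n : Type*} [Fintype n] [DecidableEq n]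

theorem hasDerivAt_exp_smul_mul_mul_exp_smul (A B S : Matrix n n ℝ) (t : ℝ) :
    HasDerivAt (fun u : ℝ => exp (u • A) * S * exp (u • B))
      (exp (t • A) * (A * S + S * B) * exp (t • B)) t := by
  -- The calculus of `exp` needs a normed ring; the `ℓ∞`-operator norm has the same topology as
  -- the entrywise norm, and `HasDerivAt` depends only on the topology.
  have hA := @hasDerivAt_exp_smul_const' ℝ (Matrix n n ℝ) _ Matrix.linftyOpNormedRing
    Matrix.linftyOpNormedAlgebra inferInstance A t
  have hB := @hasDerivAt_exp_smul_const ℝ (Matrix n n ℝ) _ Matrix.linftyOpNormedRing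
    Matrix.linftyOpNormedAlgebra inferInstance B t
  have hderiv : A * exp (t • A) * S * exp (t • B) + exp (t • A) * S * (exp (t • B) * B)
      = exp (t • A) * (A * S + S * B) * exp (t • B) := by
    rw [((Commute.refl A).smul_right t).exp_right.eq,
      ((Commute.refl B).smul_left t).exp_left.eq]
    noncomm_ring
  let _ : NormedRing (Matrix n n ℝ) := Matrix.linftyOpNormedRing
  let _ : NormedAlgebra ℝ (Matrix n n ℝ) := Matrix.linftyOpNormedAlgebra
  exact ((hA.mul_const S).mul hB).congr_deriv hderiv

theorem integral_exp_smul_mul_mul_exp_smul_of_sylvester {A B D S : Matrix n n ℝ}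
    (hS : A * S + S * B = -D) (t : ℝ) :
    ∫ s in (0 : ℝ)..t, exp ((t - s) • A) * D * exp ((t - s) • B)
      = S - exp (t • A) * S * exp (t • B) := by
  have hderiv (u : ℝ) : HasDerivAt (fun u : ℝ => -(exp (u • A) * S * exp (u • B)))
      (exp (u • A) * D * exp (u • B)) u := by
    refine (hasDerivAt_exp_smul_mul_mul_exp_smul A B S u).neg.congr_deriv ?_
    rw [hS]
    noncomm_ring
  have hcont : Continuous fun u : ℝ => exp (u • A) * D * exp (u • B) :=
    continuous_iff_continuousAt.2 fun u =>
      (hasDerivAt_exp_smul_mul_mul_exp_smul A B D u).continuousAt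
  rw [intervalIntegral.integral_comp_sub_left (fun u => exp (u • A) * D * exp (u • B)) t,
    sub_self, sub_zero, intervalIntegral.integral_eq_sub_of_hasDerivAt
      (fun u _ => hderiv u) (hcont.intervalIntegrable 0 t)]
  simp only [zero_smul, exp_zero, one_mul, mul_one, sub_neg_eq_add]
  abel

theorem tendsto_exp_smul_atTop_zero_of_mul_eq_mul_diagonal {A P : Matrix n n ℝ} {d : n → ℝ}
    (hP : IsUnit P) (hAP : A * P = P * diagonal d) (hd : ∀ i, d i < 0) :
    Tendsto (fun t : ℝ => exp (t • A)) atTop (𝓝 0) := by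
  have hA : A = P * diagonal d * P⁻¹ := by
    rw [← hAP, Matrix.mul_assoc, mul_nonsing_inv _ ((isUnit_iff_isUnit_det P).1 hP), mul_one]
  have hexp (t : ℝ) :
      exp (t • A) = P * diagonal (fun i => Real.exp (t * d i)) * P⁻¹ := by
    rw [hA, ← Matrix.smul_mul, ← Matrix.mul_smul, ← diagonal_smul, exp_conj _ _ hP,
      exp_diagonal]
    congr
    funext i
    simp [Real.exp_eq_exp_ℝ]
  have hdiag : Tendsto (fun t : ℝ => diagonal fun i => Real.exp (t * d i)) atTop
      (𝓝 (diagonal 0)) :=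
    (continuous_id.matrix_diagonal.tendsto 0).comp <| tendsto_pi_nhds.2 fun i =>
      Real.tendsto_exp_atBot.comp (tendsto_id.atTop_mul_const_of_neg (hd i))
  simpa [hexp] using (hdiag.const_mul P).mul_const P⁻¹

theorem tendsto_integral_exp_smul_mul_mul_exp_smul_transpose {A D S : Matrix n n ℝ}
    (hA : Tendsto (fun t : ℝ => exp (t • A)) atTop (𝓝 0)) (hS : A * S + S * Aᵀ = -D) :
    Tendsto (fun t : ℝ => ∫ s in (0 : ℝ)..t, exp ((t - s) • A) * D * exp ((t - s) • Aᵀ))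
      atTop (𝓝 S) := by
  have hAt : Tendsto (fun t : ℝ => exp (t • Aᵀ)) atTop (𝓝 0) := by
    have h := (continuous_id.matrix_transpose.tendsto (0 : Matrix n n ℝ)).comp hA
    simpa only [Function.comp_def, id, transpose_zero, ← exp_transpose, transpose_smul] using h
  simp only [integral_exp_smul_mul_mul_exp_smul_of_sylvester hS]
  simpa using tendsto_const_nhds.sub ((hA.mul_const S).mul hAt)

theorem tendsto_exp_smul_companion_atTop_zero {a b : ℝ} (hab : a ≠ b) (ha : a < 0) (hb : b < 0) :
    Tendsto (fun t : ℝ => exp (t • !![0, 1; -(a * b), a + b])) atTop (𝓝 0) := by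
  refine tendsto_exp_smul_atTop_zero_of_mul_eq_mul_diagonal (P := !![1, 1; a, b]) (d := ![a, b])
    ?_ ?_ (Fin.forall_fin_two.2 ⟨ha, hb⟩)
  · rw [isUnit_iff_isUnit_det, det_fin_two_of, isUnit_iff_ne_zero]
    simpa [sub_eq_zero] using hab.symm
  · ext i j
    fin_cases i <;> fin_cases j <;> simp <;> ring

end Matrix

theorem tendsto_exp_smul_overdamped_atTop_zero {w lam : ℝ} (hw : 0 < w) (hlam : 2 * w < lam) :
    Tendsto (fun t : ℝ => exp (t • !![0, 1; -w ^ 2, -lam])) atTop (𝓝 0) := by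
  have hdisc : 0 < lam ^ 2 - 4 * w ^ 2 := by nlinarith
  obtain ⟨r, hr, hr2⟩ : ∃ r : ℝ, 0 < r ∧ r ^ 2 = lam ^ 2 - 4 * w ^ 2 :=
    ⟨√(lam ^ 2 - 4 * w ^ 2), Real.sqrt_pos.2 hdisc, Real.sq_sqrt hdisc.le⟩
  have hrlam : r < lam := by nlinarith
  have h := Matrix.tendsto_exp_smul_companion_atTop_zero (a := (-lam - r) / 2)
    (b := (-lam + r) / 2) (by linarith) (by linarith) (by linarith)
  rwa [show (-lam - r) / 2 * ((-lam + r) / 2) = w ^ 2 by linear_combination (-1 / 4 : ℝ) * hr2,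
    show (-lam - r) / 2 + (-lam + r) / 2 = -lam by ring] at h

theorem damped_oscillator_sylvester {w : ℝ} (hw : w ≠ 0) (lam : ℝ) :
    !![0, 1; -w ^ 2, -lam] * !![1 / w ^ 2, 0; 0, 1]
      + !![1 / w ^ 2, 0; 0, 1] * (!![0, 1; -w ^ 2, -lam])ᵀ = -!![0, 0; 0, 2 * lam] := by
  ext i j
  fin_cases i <;> fin_cases j <;> simp [vecMul, dotProduct, Fin.sum_univ_two, hw, two_mul]

/-- The covariance `Σ(t) = ∫₀ᵗ e^{(t−s)A} D e^{(t−s)Aᵀ} ds` of the overdamped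
Ornstein–Uhlenbeck process converges as `t → ∞` to the stationary covariance
`diag(1/w², 1)`. -/
theorem ou_covariance_limit (w lam : ℝ) (hw : 0 < w) (hlam : 2 * w < lam)
    (A D : Matrix (Fin 2) (Fin 2) ℝ)
    (hA : A = !![0, 1; -w ^ 2, -lam]) (hD : D = !![0, 0; 0, 2 * lam]) :
    Tendsto
      (fun t : ℝ => ∫ s in (0 : ℝ)..t,
        NormedSpace.exp ((t - s) • A) * D * NormedSpace.exp ((t - s) • Aᵀ))
      atTop (nhds (!![1 / w ^ 2, 0; 0, 1] : Matrix (Fin 2) (Fin 2) ℝ)) := by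
  subst hA hD
  exact Matrix.tendsto_integral_exp_smul_mul_mul_exp_smul_transpose
    (tendsto_exp_smul_overdamped_atTop_zero hw hlam) (damped_oscillator_sylvester hw.ne' lam)
end

section
/- For every k ∈ (0,1), every α > 0, and every V ≥ 1, there exist real numbers a, x, y with a > 0, 0 < y < x, and (a + x)(a − y) > a², such that for every v ∈ [1, V] the symmetric 2×2 matrix with rows (g₁, g₂) and (g₂, g₃) is positive semidefinite, where g₁ = (v⁻¹ − (1−k)v⁻²)·a − (1−k)(x·v⁻² + 2/α), g₂ = (1 − (1−k)v⁻¹)·a − (x + y)/2, and g₃ = (v − (1−k))·a − (2v − (1−k))·(y − 2/α). -/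
/-!
Take `y = 2 / α`, so that `g₃ = c a` with `c = v - (1 - k) ≥ k`. Then
`v² det = c a (v (x + y) - (1 - k) (x + v² y)) - v² (x + y)² / 4`: the terms of order `a²` cancel,
and the coefficient of `a` is at least `k y` for all `v ∈ [1, V]` once `k x ≥ V² y`. Hence a large
`a` makes the determinant nonnegative, and also gives `a (x - y) > x y`, i.e. `(a + x)(a - y) > a²`.
-/

open Matrix Set

theorem Matrix.posSemidef_fin_two_of_det_nonneg {p q r : ℝ} (hr : 0 < r)
    (hdet : 0 ≤ !![p, q; q, r].det) : PosSemidef !![p, q; q, r] := by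
  rw [det_fin_two_of] at hdet
  refine .of_dotProduct_mulVec_nonneg ?_ fun z ↦ ?_
  · ext i j; fin_cases i <;> fin_cases j <;> rfl
  · simp only [dotProduct, mulVec, Fin.sum_univ_two, of_apply, cons_val', cons_val_zero,
      cons_val_one, empty_val', cons_val_fin_one, star_trivial]
    -- `r` times the quadratic form is a sum of two squares
    have : 0 ≤ r * (z 0 * (p * z 0 + q * z 1) + z 1 * (q * z 0 + r * z 1)) := by
      nlinarith [sq_nonneg (q * z 0 + r * z 1), mul_nonneg hdet (sq_nonneg (z 0))]
    exact nonneg_of_mul_nonneg_right this hr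

/-- The matrix of the theorem for the mode of frequency `v`; `β` stands for `2 / α`. -/
noncomputable def lyapunovMatrix (k β a x y v : ℝ) : Matrix (Fin 2) (Fin 2) ℝ :=
  !![(v⁻¹ - (1 - k) * v⁻¹ ^ 2) * a - (1 - k) * (x * v⁻¹ ^ 2 + β),
      (1 - (1 - k) * v⁻¹) * a - (x + y) / 2;
    (1 - (1 - k) * v⁻¹) * a - (x + y) / 2,
      (v - (1 - k)) * a - (2 * v - (1 - k)) * (y - β)]

section

variable {k β a x v : ℝ}

theorem sq_mul_det_lyapunovMatrix (hv : v ≠ 0) :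
    v ^ 2 * (lyapunovMatrix k β a x β v).det =
      (v - (1 - k)) * a * (v * (x + β) - (1 - k) * (x + v ^ 2 * β)) - (v * (x + β) / 2) ^ 2 := by
  rw [lyapunovMatrix, det_fin_two_of]
  field_simp
  ring

theorem lyapunovMatrix_posSemidef {V : ℝ} (hk : 0 < k) (hβ : 0 < β) (ha : 0 < a)
    (hx : V ^ 2 * β ≤ k * x) (hax : V ^ 2 * (x + β) ^ 2 ≤ 4 * k * β * a) (hv : v ∈ Icc 1 V) :
    (lyapunovMatrix k β a x β v).PosSemidef := by
  obtain ⟨hv1, hvV⟩ := hv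
  have hc : k ≤ v - (1 - k) := by linarith
  have hx0 : 0 ≤ x := nonneg_of_mul_nonneg_right ((by positivity : 0 ≤ V ^ 2 * β).trans hx) hk
  have hvV2 : v ^ 2 ≤ V ^ 2 := pow_le_pow_left₀ (by linarith) hvV 2
  have hcross : β ≤ v * (x + β) - (1 - k) * (x + v ^ 2 * β) := by
    nlinarith [mul_nonneg (sub_nonneg.2 hv1) (add_nonneg hx0 hβ.le),
      mul_nonneg (sub_nonneg.2 hvV2) hβ.le, mul_nonneg (mul_nonneg hk.le (sq_nonneg v)) hβ.le]
  have hdet : 0 ≤ (lyapunovMatrix k β a x β v).det := by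
    refine nonneg_of_mul_nonneg_right ?_ (by positivity : 0 < v ^ 2)
    rw [sq_mul_det_lyapunovMatrix (by positivity)]
    nlinarith [mul_le_mul hc hcross hβ.le (by linarith),
      mul_le_mul_of_nonneg_right hvV2 (sq_nonneg (x + β))]
  exact posSemidef_fin_two_of_det_nonneg (by simpa using mul_pos (hk.trans_le hc) ha) hdet

end

/-- Algebraic core of the `2 − ε` convergence rate for diagonal quadratic potentials:
for every `k ∈ (0,1)`, `α > 0` and `V ≥ 1`, there exist `a > 0` and `0 < y < x` with
`(a + x)(a − y) > a²` such that for all `v ∈ [1, V]` the matrix `[[g₁, g₂], [g₂, g₃]]`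
is positive semidefinite. -/
theorem diagonal_quadratic_psd_core (k α V : ℝ) (hk : k ∈ Set.Ioo (0 : ℝ) 1)
    (hα : 0 < α) (hV : 1 ≤ V) :
    ∃ a x y : ℝ, 0 < a ∧ 0 < y ∧ y < x ∧ (a + x) * (a - y) > a ^ 2 ∧
      ∀ v ∈ Set.Icc (1 : ℝ) V,
        Matrix.PosSemidef
          !![(v⁻¹ - (1 - k) * v⁻¹ ^ 2) * a - (1 - k) * (x * v⁻¹ ^ 2 + 2 / α),
              (1 - (1 - k) * v⁻¹) * a - (x + y) / 2;
            (1 - (1 - k) * v⁻¹) * a - (x + y) / 2,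
              (v - (1 - k)) * a - (2 * v - (1 - k)) * (y - 2 / α)] := by
  obtain ⟨hk, -⟩ := hk
  set β := 2 / α
  have hβ : 0 < β := by positivity
  set x := β + V ^ 2 * β / k
  have hβx : β < x := lt_add_of_pos_right β (by positivity)
  have hx : V ^ 2 * β ≤ k * x := by
    rw [mul_add, mul_div_cancel₀ _ hk.ne']
    linarith [mul_pos hk hβ]
  obtain ⟨a, ha⟩ := exists_gt (max (x * β / (x - β)) (V ^ 2 * (x + β) ^ 2 / (4 * k * β)))
  rw [max_lt_iff, div_lt_iff₀ (sub_pos.2 hβx), div_lt_iff₀ (by positivity)] at ha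
  have ha0 : 0 < a :=
    pos_of_mul_pos_left ((by positivity : (0 : ℝ) < x * β).trans ha.1) (sub_pos.2 hβx).le
  refine ⟨a, x, β, ha0, hβ, hβx, by linear_combination ha.1, fun v hv ↦ ?_⟩
  exact lyapunovMatrix_posSemidef hk hβ ha0 hx (by linarith) hv
end
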